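/- A graph inverse semigroup S(E) admits a nontrivial strong grading (by some group Γ) if and only if the graph E is nonempty and has no source vertices. In particular: if E has a source vertex then every strong grading on S(E) is trivial, and if E is nonempty with no sources then for every positive integer n the map x y⁻¹ ↦ (|x| − |y|) + nℤ is a strong ℤ/nℤ-grading on S(E). -/

import Mathlib

/-! Graph inverse semigroups, modelled concretely (see the paper, §7): a graph is given
by `src rng : E → V`; a nonzero element of `S(E)` is uniquely `x y⁻¹` for paths `x, y`
with `r(x) = r(y)`, recorded as a pair of (starting vertex, edge list) pairs; `none` is
the zero.  `ValidGIS` carves out the elements of `S(E)` inside the raw carrier. -/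

variable {V : Type u} {E : Type u}

/-- `goodFrom src rng v l`: the edge list `l` forms a path starting at the vertex `v`. -/
def goodFrom (src rng : E → V) : V → List E → Prop
  | _, [] => True
  | v, e :: l => src e = v ∧ goodFrom src rng (rng e) l

/-- The end (range) vertex of the path starting at `v` with edge list `l`. -/
def pend (rng : E → V) : V → List E → V
  | v, [] => v
  | _, e :: l => pend rng (rng e) l

/-- Raw carrier for the graph inverse semigroup `S(E)`. -/
abbrev RawGIS (V E : Type u) : Type u := Option ((V × List E) × (V × List E))

/-- Validity of a raw element. -/
def ValidGIS (src rng : E → V) : RawGIS V E → Prop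
  | none => True
  | some (x, y) =>
      goodFrom src rng x.1 x.2 ∧ goodFrom src rng y.1 y.2 ∧
        pend rng x.1 x.2 = pend rng y.1 y.2

open Classical in
/-- Multiplication in `S(E)`. -/
noncomputable def gmul : RawGIS V E → RawGIS V E → RawGIS V E
  | some (x, y), some (u, w) =>
      if y.1 = u.1 ∧ y.2 <+: u.2 then
        some ((x.1, x.2 ++ u.2.drop y.2.length), w)
      else if u.1 = y.1 ∧ u.2 <+: y.2 then
        some (x, (w.1, w.2 ++ y.2.drop u.2.length))
      else none
  | _, _ => none

/-- `deg : S(E) ∖ {0} → Γ` is a grading of `S(E)`. -/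
def IsGradingOn {Γ : Type u'} [Group Γ] (src rng : E → V) (deg : RawGIS V E → Γ) :
    Prop :=
  ∀ a b : RawGIS V E, ValidGIS src rng a → ValidGIS src rng b → gmul a b ≠ none →
    deg (gmul a b) = deg a * deg b

/-- The component `S(E)_α` of a grading `deg`. -/
def compG {Γ : Type u'} (src rng : E → V) (deg : RawGIS V E → Γ) (α : Γ) :
    Set (RawGIS V E) :=
  {a | a = none ∨ (ValidGIS src rng a ∧ deg a = α)}

/-- The grading `deg` of `S(E)` is strong: `S(E)_α S(E)_β = S(E)_{αβ}`. -/
def IsStrongOn {Γ : Type u'} [Group Γ] (src rng : E → V) (deg : RawGIS V E → Γ) :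
    Prop :=
  ∀ α β : Γ, Set.image2 gmul (compG src rng deg α) (compG src rng deg β) =
    compG src rng deg (α * β)

/-- The `ℤ/nℤ`-degree map `x y⁻¹ ↦ (|x| - |y|) + nℤ` (written multiplicatively). -/
def degZMod (V E : Type u) (n : ℕ) : RawGIS V E → Multiplicative (ZMod n)
  | some (x, y) =>
      Multiplicative.ofAdd ((x.2.length : ZMod n) - (y.2.length : ZMod n))
  | none => 1


/-!
A nonzero idempotent `v v⁻¹` at a source `v` has degree `1` and factors as `a b` only with
`a = v v⁻¹`: the left factor `x y⁻¹` of `v v⁻¹` must have `x = v`, and a path `y` ending at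
a source is trivial.  So if the grading is strong, `v v⁻¹ ∈ S_α S_{α⁻¹}` forces `α = 1` for
every `α`.  Conversely, when no vertex is a source every path can be extended backwards to any
length, so `x y⁻¹` of degree `αβ` splits as `(x z⁻¹)(z y⁻¹)` with `|x| - |z| ≡ α (mod n)`.
-/

section Paths

variable {src rng : E → V}

theorem pend_append (l₁ : List E) (v : V) (l₂ : List E) :
    pend rng v (l₁ ++ l₂) = pend rng (pend rng v l₁) l₂ := by
  induction l₁ generalizing v with
  | nil => rfl
  | cons e l ih => exact ih (rng e)

theorem goodFrom_append (l₁ : List E) (v : V) (l₂ : List E) :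
    goodFrom src rng v (l₁ ++ l₂) ↔
      goodFrom src rng v l₁ ∧ goodFrom src rng (pend rng v l₁) l₂ := by
  induction l₁ generalizing v with
  | nil => simp [goodFrom, pend]
  | cons e l ih => simp [goodFrom, pend, ih, and_assoc]

theorem eq_nil_of_pend_eq_source {v : V} (hv : ∀ e : E, rng e ≠ v) {l : List E} {w : V}
    (h : pend rng w l = v) : l = [] := by
  induction l generalizing w with
  | nil => rfl
  | cons e l ih => cases ih h; exact absurd h (hv e)

theorem exists_path_of_length (hrng : ∀ v : V, ∃ e : E, rng e = v) (k : ℕ) (v : V) :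
    ∃ (m : V) (z : List E), goodFrom src rng m z ∧ pend rng m z = v ∧ z.length = k := by
  induction k with
  | zero => exact ⟨v, [], trivial, rfl, rfl⟩
  | succ k ih =>
    obtain ⟨m, z, hz, hend, hlen⟩ := ih
    obtain ⟨e, rfl⟩ := hrng m
    exact ⟨src e, e :: z, ⟨rfl, hz⟩, hend, by simp [hlen]⟩

end Paths

section Multiplication

variable {src rng : E → V}

@[simp]
theorem gmul_none_left (b : RawGIS V E) : gmul none b = none := by
  cases b <;> rfl

@[simp]
theorem gmul_none_right (a : RawGIS V E) : gmul a none = none := by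
  cases a <;> rfl

theorem gmul_some_some_self (x z y : V × List E) :
    gmul (some (x, z)) (some (z, y)) = some (x, y) := by
  simp [gmul]

theorem prefix_of_gmul_eq_some {x y x' y' : V × List E} {b : RawGIS V E}
    (h : gmul (some (x, y)) b = some (x', y')) : x.1 = x'.1 ∧ x.2 <+: x'.2 := by
  obtain _ | ⟨u, w⟩ := b
  · cases h
  simp only [gmul] at h
  split_ifs at h <;> cases h
  · exact ⟨rfl, List.prefix_append _ _⟩
  · exact ⟨rfl, List.prefix_refl _⟩

theorem ValidGIS.gmul {a b : RawGIS V E} (ha : ValidGIS src rng a) (hb : ValidGIS src rng b) :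
    ValidGIS src rng (gmul a b) := by
  obtain _ | ⟨⟨x₁, x₂⟩, ⟨y₁, y₂⟩⟩ := a
  · simp [ValidGIS]
  obtain _ | ⟨⟨u₁, u₂⟩, ⟨w₁, w₂⟩⟩ := b
  · simp [ValidGIS]
  obtain ⟨hx, hy, hxy⟩ := ha
  obtain ⟨hu, hw, huw⟩ := hb
  simp only [_root_.gmul]
  split_ifs with hyu huy
  · obtain ⟨rfl, t, rfl⟩ := hyu
    rw [List.drop_left]
    rw [goodFrom_append] at hu
    rw [pend_append] at huw
    exact ⟨(goodFrom_append _ _ _).2 ⟨hx, hxy ▸ hu.2⟩, hw, by rwa [pend_append, hxy]⟩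
  · obtain ⟨rfl, t, rfl⟩ := huy
    rw [List.drop_left]
    rw [goodFrom_append] at hy
    rw [pend_append] at hxy
    exact ⟨hx, (goodFrom_append _ _ _).2 ⟨hw, huw ▸ hy.2⟩, by rwa [pend_append, ← huw]⟩
  · trivial

end Multiplication

section Gradings

variable {Γ Γ' : Type*} [Group Γ] [Group Γ'] {src rng : E → V} {deg : RawGIS V E → Γ}

theorem IsGradingOn.comp (hdeg : IsGradingOn src rng deg) (f : Γ →* Γ') :
    IsGradingOn src rng (f ∘ deg) := fun a b ha hb hab => by
  simp [hdeg a b ha hb hab]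

theorem compG_comp_mulEquiv (f : Γ ≃* Γ') (γ : Γ') :
    compG src rng (f ∘ deg) γ = compG src rng deg (f.symm γ) := by
  ext a
  simp [compG, f.eq_symm_apply]

theorem IsStrongOn.comp_mulEquiv (hdeg : IsStrongOn src rng deg) (f : Γ ≃* Γ') :
    IsStrongOn src rng (f ∘ deg) := fun α β => by
  simp only [compG_comp_mulEquiv, map_mul]
  exact hdeg _ _

theorem IsGradingOn.image2_compG_subset (hdeg : IsGradingOn src rng deg) (α β : Γ) :
    Set.image2 gmul (compG src rng deg α) (compG src rng deg β) ⊆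
      compG src rng deg (α * β) := by
  rintro _ ⟨a, ha, b, hb, rfl⟩
  by_cases hab : gmul a b = none
  · exact Or.inl hab
  obtain ⟨hva, rfl⟩ := ha.resolve_left (by rintro rfl; simp at hab)
  obtain ⟨hvb, rfl⟩ := hb.resolve_left (by rintro rfl; simp at hab)
  exact Or.inr ⟨hva.gmul hvb, hdeg a b hva hvb hab⟩

/-- The right factor gets the complementary degree for free, by cancellation in `Γ`. -/
theorem IsGradingOn.isStrongOn (hdeg : IsGradingOn src rng deg)
    (hfactor : ∀ (α : Γ) (c : RawGIS V E), ValidGIS src rng c → c ≠ none →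
      ∃ a b, ValidGIS src rng a ∧ ValidGIS src rng b ∧ deg a = α ∧ gmul a b = c) :
    IsStrongOn src rng deg := by
  refine fun α β => (hdeg.image2_compG_subset α β).antisymm ?_
  rintro c (rfl | ⟨hc, hdc⟩)
  · exact ⟨none, Or.inl rfl, none, Or.inl rfl, rfl⟩
  by_cases hc0 : c = none
  · exact ⟨none, Or.inl rfl, none, Or.inl rfl, hc0.symm⟩
  obtain ⟨a, b, ha, hb, rfl, rfl⟩ := hfactor α c hc hc0
  have hdb : deg a * deg b = deg a * β := by rw [← hdeg a b ha hb hc0, hdc]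
  exact ⟨a, Or.inr ⟨ha, rfl⟩, b, Or.inr ⟨hb, mul_left_cancel hdb⟩, rfl⟩

end Gradings

section Source

/-- The vertex `v = v v⁻¹` of `S(E)`. -/
def vertexGIS (v : V) : RawGIS V E := some ((v, []), (v, []))

variable {Γ : Type*} [Group Γ] {src rng : E → V} {deg : RawGIS V E → Γ}

theorem gmul_vertexGIS_self (v : V) : gmul (vertexGIS (E := E) v) (vertexGIS v) = vertexGIS v :=
  gmul_some_some_self _ _ _

theorem validGIS_vertexGIS (v : V) : ValidGIS src rng (vertexGIS (E := E) v) :=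
  ⟨trivial, trivial, rfl⟩

theorem IsGradingOn.deg_vertexGIS (hdeg : IsGradingOn src rng deg) (v : V) :
    deg (vertexGIS v) = 1 := by
  have h := hdeg _ _ (validGIS_vertexGIS v) (validGIS_vertexGIS v)
    (by rw [gmul_vertexGIS_self]; simp [vertexGIS])
  rw [gmul_vertexGIS_self] at h
  exact left_eq_mul.mp h

theorem eq_vertexGIS_of_gmul_eq {v : V} (hv : ∀ e : E, rng e ≠ v) {a b : RawGIS V E}
    (ha : ValidGIS src rng a) (hab : gmul a b = vertexGIS v) : a = vertexGIS v := by
  obtain _ | ⟨x, y⟩ := a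
  · simp [vertexGIS] at hab
  obtain ⟨hx1, hx2⟩ := prefix_of_gmul_eq_some hab
  obtain ⟨x1, x2⟩ := x
  obtain ⟨y1, y2⟩ := y
  obtain rfl : x1 = v := hx1
  obtain rfl : x2 = [] := List.prefix_nil.mp hx2
  obtain rfl : y2 = [] := eq_nil_of_pend_eq_source hv ha.2.2.symm
  obtain rfl : y1 = x1 := ha.2.2.symm
  rfl

theorem eq_one_of_isStrongOn_of_source (hdeg : IsGradingOn src rng deg)
    (hstrong : IsStrongOn src rng deg) {v : V} (hv : ∀ e : E, rng e ≠ v) (α : Γ) : α = 1 := by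
  have hmem : vertexGIS v ∈ compG src rng deg (α * α⁻¹) := by
    rw [mul_inv_cancel]
    exact Or.inr ⟨validGIS_vertexGIS v, hdeg.deg_vertexGIS v⟩
  rw [← hstrong] at hmem
  obtain ⟨a, ha | ⟨ha, rfl⟩, b, -, hab⟩ := hmem
  · simp [ha, vertexGIS] at hab
  rw [eq_vertexGIS_of_gmul_eq hv ha hab, hdeg.deg_vertexGIS]

end Source

section DegZMod

variable {src rng : E → V}

theorem isGradingOn_degZMod (n : ℕ) : IsGradingOn src rng (degZMod V E n) := by
  rintro (_ | ⟨x, y⟩) (_ | ⟨u, w⟩) - - hab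
  iterate 3 simp at hab
  simp only [gmul] at hab ⊢
  split_ifs at hab ⊢ with hyu huy
  · simp only [degZMod, ← ofAdd_add, List.length_append, List.length_drop,
      Nat.cast_add, Nat.cast_sub hyu.2.length_le]
    congr 1
    ring
  · simp only [degZMod, ← ofAdd_add, List.length_append, List.length_drop,
      Nat.cast_add, Nat.cast_sub huy.2.length_le]
    congr 1
    ring
  · exact absurd rfl hab

theorem isStrongOn_degZMod (hrng : ∀ v : V, ∃ e : E, rng e = v) {n : ℕ} [NeZero n] :
    IsStrongOn src rng (degZMod V E n) := by
  refine isGradingOn_degZMod n |>.isStrongOn fun α c hc hc0 => ?_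
  obtain _ | ⟨x, y⟩ := c
  · exact absurd rfl hc0
  obtain ⟨hx, hy, hxy⟩ := hc
  obtain ⟨m, z, hz, hend, hlen⟩ := exists_path_of_length (src := src) hrng
    ((x.2.length - Multiplicative.toAdd α : ZMod n).val) (pend rng x.1 x.2)
  refine ⟨some (x, (m, z)), some ((m, z), y), ⟨hx, hz, hend.symm⟩, ⟨hz, hy, hend.trans hxy⟩,
    ?_, gmul_some_some_self _ _ _⟩
  change Multiplicative.ofAdd ((x.2.length : ZMod n) - (z.length : ZMod n)) = α
  rw [hlen, ZMod.natCast_val, ZMod.cast_id', id, sub_sub_cancel]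
  rfl

end DegZMod

/-- Theorem `strgrgis` and its ingredients: a graph inverse semigroup `S(E)` admits a
nontrivial strong grading iff `E` is nonempty and has no source vertices.  In
particular: if `E` has a source vertex then every strong grading on `S(E)` is trivial;
and if `E` is nonempty with no sources then for every `n > 0` the map
`x y⁻¹ ↦ (|x| - |y|) + nℤ` is a strong `ℤ/nℤ`-grading on `S(E)`. -/
theorem gis_nontrivial_strong_grading_iff {V E : Type u} (src rng : E → V) :
    ((∃ (Γ : Type u) (_i : Group Γ) (deg : RawGIS V E → Γ),
        IsGradingOn src rng deg ∧ IsStrongOn src rng deg ∧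
          ∃ a : RawGIS V E, ValidGIS src rng a ∧ a ≠ none ∧ deg a ≠ 1) ↔
      (Nonempty V ∧ ∀ v : V, ∃ e : E, rng e = v)) ∧
    ((∃ v : V, ∀ e : E, rng e ≠ v) →
      ∀ (Γ : Type u') (_i : Group Γ) (deg : RawGIS V E → Γ),
        IsGradingOn src rng deg → IsStrongOn src rng deg →
        ∀ a : RawGIS V E, ValidGIS src rng a → a ≠ none → deg a = 1) ∧
    ((Nonempty V ∧ ∀ v : V, ∃ e : E, rng e = v) →
      ∀ n : ℕ, 0 < n →
        IsGradingOn src rng (degZMod V E n) ∧ IsStrongOn src rng (degZMod V E n)) := by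
  refine ⟨⟨?_, ?_⟩, ?_, ?_⟩
  · rintro ⟨Γ, _, deg, hdeg, hstrong, _ | ⟨x, _⟩, -, ha0, hdega⟩
    · exact absurd rfl ha0
    refine ⟨⟨x.1⟩, fun v => ?_⟩
    by_contra! hv
    exact hdega (eq_one_of_isStrongOn_of_source hdeg hstrong hv _)
  · rintro ⟨⟨v⟩, hrng⟩
    obtain ⟨e, rfl⟩ := hrng v
    -- `ULift` only to land in `Type u`
    let f : Multiplicative (ZMod 2) ≃* ULift.{u} (Multiplicative (ZMod 2)) := MulEquiv.ulift.symm
    refine ⟨_, inferInstance, f ∘ degZMod V E 2, (isGradingOn_degZMod 2).comp f.toMonoidHom,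
      (isStrongOn_degZMod hrng).comp_mulEquiv f, some ((src e, [e]), (rng e, [])),
      ⟨⟨rfl, trivial⟩, trivial, rfl⟩, by simp, ?_⟩
    simp [f, degZMod]
  · rintro ⟨v, hv⟩ Γ _ deg hdeg hstrong a - -
    exact eq_one_of_isStrongOn_of_source hdeg hstrong hv _
  · rintro ⟨-, hrng⟩ n hn
    have : NeZero n := ⟨hn.ne'⟩
    exact ⟨isGradingOn_degZMod n, isStrongOn_degZMod hrng⟩
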